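/- arXiv:1904.01372 — 7 statements merged into one kernel-verified Lean document; each statement's English description precedes it below -/
import Mathlib

section
/- If S and T are finite semigroups and φ: S → T is a surjective homomorphism that is injective on every R-class of S (i.e., whenever s₁ R s₂ in S and φ(s₁) = φ(s₂), then s₁ = s₂), then for every idempotent e of T, the preimage φ⁻¹(e) is an R-trivial subsemigroup of S. -/
/-- Green's R-preorder: `a ≤_R b` iff `a S¹ ⊆ b S¹`, i.e. `a = b` or `a = b*x`. -/
def rLe {S : Type*} [Semigroup S] (a b : S) : Prop := a = b ∨ ∃ x, a = b * x

/-- Green's R-equivalence. -/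
def rEquiv {S : Type*} [Semigroup S] (a b : S) : Prop := rLe a b ∧ rLe b a

/-- R-preorder relative to a subsemigroup (subset) `P`. -/
def rLeIn {S : Type*} [Semigroup S] (P : Set S) (a b : S) : Prop :=
  a = b ∨ ∃ x ∈ P, a = b * x

/-- R-equivalence relative to a subset `P`. -/
def rEquivIn {S : Type*} [Semigroup S] (P : Set S) (a b : S) : Prop :=
  rLeIn P a b ∧ rLeIn P b a

section

variable {S : Type*} [Semigroup S] {P : Set S} {a b : S}

theorem rLeIn.rLe (h : rLeIn P a b) : rLe a b :=
  h.imp_right fun ⟨x, _, hx⟩ => ⟨x, hx⟩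

theorem rEquivIn.rEquiv (h : rEquivIn P a b) : rEquiv a b :=
  ⟨h.1.rLe, h.2.rLe⟩

end

theorem mul_mem_preimage_of_idempotent {S T : Type*} [Mul S] [Mul T] (φ : S → T)
    (hhom : ∀ a b : S, φ (a * b) = φ a * φ b) {e : T} (he : e * e = e) {s₁ s₂ : S}
    (h₁ : φ s₁ = e) (h₂ : φ s₂ = e) : φ (s₁ * s₂) = e := by
  rw [hhom, h₁, h₂, he]

theorem stmt0_general {S T : Type*} [Semigroup S] [Semigroup T]
    (φ : S → T) (hhom : ∀ a b : S, φ (a * b) = φ a * φ b)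
    (h11R : ∀ s₁ s₂ : S, rEquiv s₁ s₂ → φ s₁ = φ s₂ → s₁ = s₂)
    (e : T) (he : e * e = e) :
    (∀ s₁ s₂ : S, φ s₁ = e → φ s₂ = e → φ (s₁ * s₂) = e) ∧
    (∀ s₁ s₂ : S, φ s₁ = e → φ s₂ = e →
      rEquivIn {s : S | φ s = e} s₁ s₂ → s₁ = s₂) :=
  ⟨fun _ _ => mul_mem_preimage_of_idempotent φ hhom he,
    fun s₁ s₂ h₁ h₂ hR => h11R s₁ s₂ hR.rEquiv (h₁.trans h₂.symm)⟩

theorem stmt0 {S T : Type*} [Semigroup S] [Fintype S] [Semigroup T] [Fintype T]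
    (φ : S → T) (hhom : ∀ a b : S, φ (a * b) = φ a * φ b)
    (hsurj : Function.Surjective φ)
    (h11R : ∀ s₁ s₂ : S, rEquiv s₁ s₂ → φ s₁ = φ s₂ → s₁ = s₂)
    (e : T) (he : e * e = e) :
    (∀ s₁ s₂ : S, φ s₁ = e → φ s₂ = e → φ (s₁ * s₂) = e) ∧
    (∀ s₁ s₂ : S, φ s₁ = e → φ s₂ = e →
      rEquivIn {s : S | φ s = e} s₁ s₂ → s₁ = s₂) :=
  stmt0_general φ hhom h11R e he
end

section
/- Let α: S → T and β: T → U be surjective homomorphisms of finite semigroups. Then the composite β ∘ α is injective on every R-class of S if and only if both α is injective on every R-class of S and β is injective on every R-class of T. -/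
theorem exists_idempotent_mem_of_finite {M : Type*} [Semigroup M] [Finite M] (s : Set M)
    (hne : s.Nonempty) (hmul : ∀ a ∈ s, ∀ b ∈ s, a * b ∈ s) : ∃ e ∈ s, e * e = e :=
  letI : TopologicalSpace M := ⊥
  haveI : DiscreteTopology M := ⟨rfl⟩
  exists_idempotent_in_compact_subsemigroup (fun _ ↦ continuous_of_discreteTopology) s hne
    s.toFinite.isCompact hmul

section Green

variable {S T : Type*} [Semigroup S] [Semigroup T]

theorem rLe.mul_right {a b : S} (h : rLe a b) (c : S) : rLe (a * c) b := by
  rcases h with rfl | ⟨x, rfl⟩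
  · exact Or.inr ⟨c, rfl⟩
  · exact Or.inr ⟨x * c, mul_assoc _ _ _⟩

theorem rLe.map {a b : S} (h : rLe a b) (f : S →ₙ* T) : rLe (f a) (f b) := by
  rcases h with rfl | ⟨x, rfl⟩
  · exact Or.inl rfl
  · exact Or.inr ⟨f x, map_mul f _ _⟩

theorem rEquiv.refl (a : S) : rEquiv a a := ⟨Or.inl rfl, Or.inl rfl⟩

theorem rEquiv.map {a b : S} (h : rEquiv a b) (f : S →ₙ* T) : rEquiv (f a) (f b) :=
  ⟨h.1.map f, h.2.map f⟩

theorem exists_rEquiv_lift [Finite S] (f : S →ₙ* T) (hf : Function.Surjective f) {t₁ t₂ : T}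
    (h : rEquiv t₁ t₂) : ∃ s₁ s₂ : S, rEquiv s₁ s₂ ∧ f s₁ = t₁ ∧ f s₂ = t₂ := by
  obtain ⟨s, rfl⟩ := hf t₁
  by_cases heq : f s = t₂
  · exact ⟨s, s, rEquiv.refl s, rfl, heq⟩
  obtain ⟨x, hx⟩ := h.1.resolve_left heq
  obtain ⟨y, hy⟩ := h.2.resolve_left (Ne.symm heq)
  obtain ⟨u, rfl⟩ := hf y
  obtain ⟨v, rfl⟩ := hf x
  have hfix : f s * f (u * v) = f s := by rw [map_mul, ← mul_assoc, ← hy, ← hx]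
  obtain ⟨e, ⟨he_le, he_fix⟩, he⟩ := exists_idempotent_mem_of_finite
    {a | rLe a (u * v) ∧ f s * f a = f s} ⟨u * v, Or.inl rfl, hfix⟩
    (fun a ⟨ha, ha'⟩ b ⟨_, hb'⟩ ↦ ⟨ha.mul_right b, by rw [map_mul, ← mul_assoc, ha', hb']⟩)
  have hs_le : rLe (s * e) (s * e * u) := by
    rcases he_le with he_eq | ⟨z, he_eq⟩
    · exact Or.inr ⟨v, by rw [mul_assoc _ u, ← he_eq, mul_assoc, he]⟩
    · exact Or.inr ⟨v * z, by rw [mul_assoc _ u, ← mul_assoc u, ← he_eq, mul_assoc, he]⟩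
  refine ⟨s * e, s * e * u, ⟨hs_le, Or.inr ⟨u, rfl⟩⟩, ?_, ?_⟩
  · rw [map_mul, he_fix]
  · rw [map_mul, map_mul, he_fix, hy]

end Green

theorem stmt2_general {S T U : Type*} [Semigroup S] [Fintype S] [Semigroup T]
    [Semigroup U]
    (α : S → T) (hα : ∀ a b : S, α (a * b) = α a * α b) (hαs : Function.Surjective α)
    (β : T → U) :
    (∀ s₁ s₂ : S, rEquiv s₁ s₂ → β (α s₁) = β (α s₂) → s₁ = s₂) ↔
      ((∀ s₁ s₂ : S, rEquiv s₁ s₂ → α s₁ = α s₂ → s₁ = s₂) ∧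
       (∀ t₁ t₂ : T, rEquiv t₁ t₂ → β t₁ = β t₂ → t₁ = t₂)) := by
  let f : S →ₙ* T := ⟨α, hα⟩
  constructor
  · intro h
    refine ⟨fun s₁ s₂ hr heq ↦ h s₁ s₂ hr (congrArg β heq), fun t₁ t₂ hr heq ↦ ?_⟩
    obtain ⟨s₁, s₂, hs, rfl, rfl⟩ := exists_rEquiv_lift f hαs hr
    exact congrArg α (h s₁ s₂ hs heq)
  · rintro ⟨hA, hB⟩ s₁ s₂ hr heq
    exact hA s₁ s₂ hr (hB _ _ (hr.map f) heq)

theorem stmt2 {S T U : Type*} [Semigroup S] [Fintype S] [Semigroup T] [Fintype T]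
    [Semigroup U] [Fintype U]
    (α : S → T) (hα : ∀ a b : S, α (a * b) = α a * α b) (hαs : Function.Surjective α)
    (β : T → U) (hβ : ∀ a b : T, β (a * b) = β a * β b) (hβs : Function.Surjective β) :
    (∀ s₁ s₂ : S, rEquiv s₁ s₂ → β (α s₁) = β (α s₂) → s₁ = s₂) ↔
      ((∀ s₁ s₂ : S, rEquiv s₁ s₂ → α s₁ = α s₂ → s₁ = s₂) ∧
       (∀ t₁ t₂ : T, rEquiv t₁ t₂ → β t₁ = β t₂ → t₁ = t₂)) :=
  stmt2_general α hα hαs β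
end

section
/- Let S be a finite semigroup in which every right stabilizer is a band (i.e., whenever q·w = q in the right regular representation the stabilizing element is idempotent). More precisely, assume: for every q ∈ S¹ and s ∈ S, q·s = q implies s² = s. Then for any q ∈ S¹ and x, y ∈ S¹ with xy ∈ S and q·(xy) = q, the elements xy and yx are J-equivalent idempotents; in particular they have the same position in any chain of regular J-classes. -/
/-- Green's J-preorder in a monoid: `a ≤_J b` iff `a ∈ M b M`. -/
def jLeM {M : Type*} [Monoid M] (a b : M) : Prop := ∃ u v : M, a = u * b * v

theorem WithOne.exists_mul_swap_eq_coe {S : Type*} [Semigroup S] {x y : WithOne S} {z : S}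
    (h : x * y = z) : ∃ w : S, y * x = w := by
  cases x with
  | one => exact ⟨z, by rwa [mul_one, ← one_mul y]⟩
  | coe a =>
    cases y with
    | one => exact ⟨z, by rwa [one_mul, ← mul_one (a : WithOne S)]⟩
    | coe b => exact ⟨b * a, rfl⟩

theorem mul_mul_swap_eq_of_mul_eq {M : Type*} [Monoid M] {q x y : M} (h : q * (x * y) = q) :
    q * x * (y * x) = q * x := by
  rw [← mul_assoc, mul_assoc q, h]

theorem jLeM_of_isIdempotentElem_mul {M : Type*} [Monoid M] {x y : M}
    (h : IsIdempotentElem (x * y)) : jLeM (x * y) (y * x) :=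
  ⟨x, y, by rw [← h.eq]; simp only [mul_assoc]⟩

theorem stmt3_general {S : Type*} [Semigroup S]
    (hstab : ∀ (q : WithOne S) (s : S), q * (s : WithOne S) = q → s * s = s)
    (q x y : WithOne S) (z : S) (hz : x * y = (z : WithOne S))
    (hq : q * (z : WithOne S) = q) :
    ∃ w : S, y * x = (w : WithOne S) ∧ z * z = z ∧ w * w = w ∧
      jLeM (z : WithOne S) (w : WithOne S) ∧ jLeM (w : WithOne S) (z : WithOne S) := by
  obtain ⟨w, hw⟩ := WithOne.exists_mul_swap_eq_coe hz
  have hz2 : z * z = z := hstab q z hq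
  have hw2 : w * w = w := by
    refine hstab (q * x) w ?_
    rw [← hw]
    exact mul_mul_swap_eq_of_mul_eq (hz ▸ hq)
  have hzIdem : IsIdempotentElem (x * y) := by
    rw [hz, IsIdempotentElem, ← WithOne.coe_mul, hz2]
  have hwIdem : IsIdempotentElem (y * x) := by
    rw [hw, IsIdempotentElem, ← WithOne.coe_mul, hw2]
  refine ⟨w, hw, hz2, hw2, ?_, ?_⟩
  · simpa only [hz, hw] using jLeM_of_isIdempotentElem_mul hzIdem
  · simpa only [hz, hw] using jLeM_of_isIdempotentElem_mul hwIdem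

theorem stmt3 {S : Type*} [Semigroup S] [Fintype S]
    (hstab : ∀ (q : WithOne S) (s : S), q * (s : WithOne S) = q → s * s = s)
    (q x y : WithOne S) (z : S) (hz : x * y = (z : WithOne S))
    (hq : q * (z : WithOne S) = q) :
    ∃ w : S, y * x = (w : WithOne S) ∧ z * z = z ∧ w * w = w ∧
      jLeM (z : WithOne S) (w : WithOne S) ∧ jLeM (w : WithOne S) (z : WithOne S) :=
  stmt3_general hstab q x y z hz hq
end

section
/- Let J₁ and J₂ be regular J-classes of a finite semigroup S with J₁ >_J J₂ (i.e., the ideal generated by J₂ is strictly contained in the ideal generated by J₁). Then for every idempotent e ∈ J₁ there exists an idempotent f ∈ J₂ such that e > f in the idempotent order, i.e., f = ef = fe and e ≠ f. -/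
/-!
If `f ≤_J e` with `e, f` idempotent, write `f = u e v` in `S¹` and put `g = (e v) f (u e)`.
Then `g` is an idempotent with `e g = g e = g`, and `f = u g v`, so `g` lies in the J-class
of `f`. Since `e` is strictly J-above that class, `g ≠ e`.
-/

/-- Green's J-preorder in a semigroup: `a ≤_J b` iff `a ∈ S¹ b S¹`. -/
def jLe {S : Type*} [Semigroup S] (a b : S) : Prop :=
  a = b ∨ (∃ u, a = u * b) ∨ (∃ v, a = b * v) ∨ ∃ u v, a = u * b * v

/-- Green's J-equivalence. -/
def jEquiv {S : Type*} [Semigroup S] (a b : S) : Prop := jLe a b ∧ jLe b a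

section Monoid

variable {M : Type*} [Monoid M] {e f u v : M}

theorem IsIdempotentElem.sandwich (he : IsIdempotentElem e) (hf : IsIdempotentElem f)
    (h : u * e * v = f) : IsIdempotentElem (e * v * f * (u * e)) :=
  calc e * v * f * (u * e) * (e * v * f * (u * e))
      = e * v * f * (u * (e * e) * v) * f * (u * e) := by simp only [mul_assoc]
    _ = e * v * (f * f * f) * (u * e) := by rw [he.eq, h]; simp only [mul_assoc]
    _ = e * v * f * (u * e) := by rw [hf.eq, hf.eq]

theorem IsIdempotentElem.mul_sandwich (he : IsIdempotentElem e) :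
    e * (e * v * f * (u * e)) = e * v * f * (u * e) := by
  simp only [← mul_assoc, he.eq]

theorem IsIdempotentElem.sandwich_mul (he : IsIdempotentElem e) :
    e * v * f * (u * e) * e = e * v * f * (u * e) := by
  rw [mul_assoc, mul_assoc u, he.eq]

theorem IsIdempotentElem.mul_sandwich_mul_of_eq (hf : IsIdempotentElem f) (h : u * e * v = f) :
    u * (e * v * f * (u * e)) * v = f :=
  calc u * (e * v * f * (u * e)) * v = u * e * v * f * (u * e * v) := by simp only [mul_assoc]
    _ = f := by rw [h, hf.eq, hf.eq]

end Monoid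

section Semigroup

variable {S : Type*} [Semigroup S] {a b c : S}

theorem jLe_iff_exists_withOne : jLe a b ↔ ∃ x y : WithOne S, (a : WithOne S) = x * b * y := by
  simp only [jLe, WithOne.exists, exists_or, one_mul, mul_one, ← WithOne.coe_mul, WithOne.coe_inj]
  tauto

theorem jLe.trans (hab : jLe a b) (hbc : jLe b c) : jLe a c := by
  obtain ⟨x, y, hab⟩ := jLe_iff_exists_withOne.1 hab
  obtain ⟨x', y', hbc⟩ := jLe_iff_exists_withOne.1 hbc
  exact jLe_iff_exists_withOne.2 ⟨x * x', y' * y, by rw [hab, hbc]; simp only [mul_assoc]⟩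

theorem WithOne.exists_coe_eq_mul_coe_mul (x y : WithOne S) (a : S) :
    ∃ c : S, (c : WithOne S) = x * a * y := by
  revert x y
  simp [WithOne.forall, ← WithOne.coe_mul]

theorem exists_idempotent_le_jEquiv_of_jLe {e f : S} (he : IsIdempotentElem e)
    (hf : IsIdempotentElem f) (hfe : jLe f e) :
    ∃ g : S, IsIdempotentElem g ∧ e * g = g ∧ g * e = g ∧ jEquiv g f := by
  obtain ⟨u, v, hfe⟩ := jLe_iff_exists_withOne.1 hfe
  have he' : IsIdempotentElem (e : WithOne S) := congrArg _ he
  have hf' : IsIdempotentElem (f : WithOne S) := congrArg _ hf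
  obtain ⟨g, hg⟩ := 
    WithOne.exists_coe_eq_mul_coe_mul ((e : WithOne S) * v) (u * (e : WithOne S)) f
  refine ⟨g, ?_, ?_, ?_, jLe_iff_exists_withOne.2 ⟨_, _, hg⟩,
    jLe_iff_exists_withOne.2 ⟨u, v, hg ▸ (hf'.mul_sandwich_mul_of_eq hfe.symm).symm⟩⟩ <;>
    apply WithOne.coe_injective <;> simp only [WithOne.coe_mul, hg]
  exacts [he'.sandwich hf' hfe.symm, he'.mul_sandwich, he'.sandwich_mul]

end Semigroup

theorem stmt5_general {S : Type*} [Semigroup S]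
    (e b : S) (he : e * e = e)
    (hbreg : ∃ f, f * f = f ∧ jEquiv f b)
    (hlt : jLe b e ∧ ¬ jLe e b) :
    ∃ f : S, f * f = f ∧ jEquiv f b ∧ e * f = f ∧ f * e = f ∧ f ≠ e := by
  obtain ⟨f, hf, hfb, hbf⟩ := hbreg
  obtain ⟨g, hg, heg, hge, hgf, hfg⟩ := 
    exists_idempotent_le_jEquiv_of_jLe he hf (hfb.trans hlt.1)
  refine ⟨g, hg, ⟨hgf.trans hfb, hbf.trans hfg⟩, heg, hge, ?_⟩
  rintro rfl
  exact hlt.2 (hgf.trans hfb)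

/-- Rhodes (1966): if `J₁ >_J J₂` are regular J-classes, every idempotent of `J₁`
dominates some idempotent of `J₂` in the natural order on idempotents. -/
theorem stmt5 {S : Type*} [Semigroup S] [Fintype S]
    (e b : S) (he : e * e = e)
    (hbreg : ∃ f, f * f = f ∧ jEquiv f b)
    (hlt : jLe b e ∧ ¬ jLe e b) :
    ∃ f : S, f * f = f ∧ jEquiv f b ∧ e * f = f ∧ f * e = f ∧ f ≠ e :=
  stmt5_general e b he hbreg hlt
end

section
/- Let e₁, e₂ be idempotents in a finite semigroup whose R relation restricted to idempotent-generated stabilizer subsemigroups is trivial, and assume e₁e₂ is idempotent with e₁ >_R e₁e₂ and e₁e₂ ≤_L e₂, and additionally e₁e₂ = e₁e₂e₁ and e₂e₁ = e₂e₁e₂. If the L-order is unambiguous (i.e., for idempotents f, g, h with h ≤_L f and h ≤_L g, either f ≤_L g or g ≤_L f), then e₁e₂ ≡_L e₂ is forced; that is, the strict case e₁e₂ <_L e₂ leads to a contradiction. -/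
/-- Green's L-preorder: `a ≤_L b` iff `S¹ a ⊆ S¹ b`. -/
def lLe {S : Type*} [Semigroup S] (a b : S) : Prop := a = b ∨ ∃ u, a = u * b

/-! Unambiguity applied to `e₁ ≥_L e₂e₁ ≤_L e₂` makes `e₁` and `e₂` L-comparable.
If `e₁ ≤_L e₂` then `e₁ = e₁e₂`, against `e₁ >_R e₁e₂`; so `e₂ ≤_L e₁`, i.e. `e₂ = e₂e₁`,
and then `e₂ = e₂e₁e₂ ≤_L e₁e₂`. -/

section Green

variable {S : Type*} [Semigroup S]

theorem lLe_mul_left (u a : S) : lLe (u * a) a := Or.inr ⟨u, rfl⟩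

theorem lLe.mul_eq_self {a f : S} (h : lLe a f) (hf : IsIdempotentElem f) : a * f = a := by
  rcases h with rfl | ⟨u, rfl⟩
  · exact hf
  · rw [mul_assoc, hf.eq]

theorem isIdempotentElem_mul_of_mul_mul_eq {e f : S} (he : IsIdempotentElem e)
    (hfef : f * e = f * e * f) : IsIdempotentElem (f * e) := by
  calc f * e * (f * e) = f * e * f * e := by simp only [mul_assoc]
    _ = f * e := by rw [← hfef, mul_assoc, he.eq]

end Green

theorem stmt7_general {S : Type*} [Semigroup S]
    (e₁ e₂ : S) (h1 : e₁ * e₁ = e₁) (h2 : e₂ * e₂ = e₂)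
    (hRstrict : rLe (e₁ * e₂) e₁ ∧ ¬ rLe e₁ (e₁ * e₂))
    (hb : e₂ * e₁ = e₂ * e₁ * e₂)
    (hunamb : ∀ f g h : S, f * f = f → g * g = g → h * h = h →
      lLe h f → lLe h g → (lLe f g ∨ lLe g f)) :
    lLe e₂ (e₁ * e₂) ∧ lLe (e₁ * e₂) e₂ := by
  have he₁ : IsIdempotentElem e₁ := h1
  have he₂ : IsIdempotentElem e₂ := h2
  have he₂₁ : IsIdempotentElem (e₂ * e₁) := isIdempotentElem_mul_of_mul_mul_eq he₁ hb
  refine ⟨?_, lLe_mul_left e₁ e₂⟩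
  rcases hunamb e₁ e₂ (e₂ * e₁) he₁ he₂ he₂₁ (lLe_mul_left e₂ e₁) (Or.inr ⟨e₂ * e₁, hb⟩)
    with hle₁₂ | hle₂₁
  · exact absurd (Or.inl (hle₁₂.mul_eq_self he₂).symm) hRstrict.2
  · refine Or.inr ⟨e₂, ?_⟩
    rw [← mul_assoc, hle₂₁.mul_eq_self he₁, he₂.eq]

theorem stmt7 {S : Type*} [Semigroup S] [Fintype S]
    (e₁ e₂ : S) (h1 : e₁ * e₁ = e₁) (h2 : e₂ * e₂ = e₂)
    (h12 : (e₁ * e₂) * (e₁ * e₂) = e₁ * e₂)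
    (hRstrict : rLe (e₁ * e₂) e₁ ∧ ¬ rLe e₁ (e₁ * e₂))
    (hL : lLe (e₁ * e₂) e₂)
    (ha : e₁ * e₂ = e₁ * e₂ * e₁) (hb : e₂ * e₁ = e₂ * e₁ * e₂)
    (hunamb : ∀ f g h : S, f * f = f → g * g = g → h * h = h →
      lLe h f → lLe h g → (lLe f g ∨ lLe g f)) :
    lLe e₂ (e₁ * e₂) ∧ lLe (e₁ * e₂) e₂ :=
  stmt7_general e₁ e₂ h1 h2 hRstrict hb hunamb
end

section
/- Let A = (Q, i, ·) be a finite deterministic A-automaton whose start state i is not reachable from any other state. Define the R-expansion A^∧R: states are strict reachability chains (i >_R q₁ >_R … >_R q_k) reachable from (i), with transition by appending q_k·a if q_k >_R q_k·a, or replacing q_k by q_k·a if q_k ≡_R q_k·a. Then the canonical map η sending a chain to its last entry is a surjective automaton morphism A^∧R → A that is injective on every mutual-reachability class of A^∧R. -/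
/-- Run an automaton from state `q` along word `w`. -/
def run {Q A : Type*} (step : Q → A → Q) (q : Q) (w : List A) : Q := w.foldl step q

/-- `q` is reachable from `p`. -/
def reaches {Q A : Type*} (step : Q → A → Q) (p q : Q) : Prop :=
  ∃ w : List A, run step p w = q

/-- Mutual reachability (the automaton ≡_R relation). -/
def equivReach {Q A : Type*} (step : Q → A → Q) (p q : Q) : Prop :=
  reaches step p q ∧ reaches step q p

open Classical in
/-- Transition function of the R-expansion `A^∧R`: states are (reversed) strict
reachability chains; the last entry is replaced if the R-class stays the same,
and a new entry is appended if the R-class strictly drops. -/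
noncomputable def estep {Q A : Type*} (step : Q → A → Q) : List Q → A → List Q
  | [], _ => []
  | (q :: rest), a =>
      if equivReach step (step q a) q then step q a :: rest
      else step q a :: q :: rest

/-- The canonical map `η` sending a chain to its last entry (chains are stored
reversed, so this is the head); `i` is the default value. -/
def lastEntry {Q : Type*} (i : Q) : List Q → Q
  | [] => i
  | (q :: _) => q

/-!
Each transition of `A^∧R` rewrites only the head of a chain, possibly pushing the old head
onto the tail; so along any run the head follows the run of `A` (this makes `η` a morphism,
and surjective by trimness) while the tail only grows by prefixing. Mutually reachable
chains therefore have tails that are suffixes of each other, hence equal, and are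
determined by their heads.
-/

section RExpansion

variable {Q A : Type*} (step : Q → A → Q)

lemma run_cons (q : Q) (a : A) (w : List A) :
    run step q (a :: w) = run step (step q a) w := rfl

lemma run_append_singleton (q : Q) (w : List A) (a : A) :
    run step q (w ++ [a]) = step (run step q w) a :=
  List.foldl_append

lemma estep_cons (q : Q) (rest : List Q) (a : A) :
    ∃ s, estep step (q :: rest) a = step q a :: (s ++ rest) := by
  simp only [estep]
  split_ifs
  · exact ⟨[], rfl⟩
  · exact ⟨[q], rfl⟩

lemma run_estep_cons (w : List A) (q : Q) (rest : List Q) :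
    ∃ s, run (estep step) (q :: rest) w = run step q w :: (s ++ rest) := by
  induction w generalizing q rest with
  | nil => exact ⟨[], rfl⟩
  | cons a w ih =>
    obtain ⟨s, hs⟩ := estep_cons step q rest a
    obtain ⟨t, ht⟩ := ih (step q a) (s ++ rest)
    exact ⟨t ++ s, by rw [run_cons, run_cons, hs, ht, List.append_assoc]⟩

lemma lastEntry_run_estep (i : Q) (w : List A) (q : Q) (rest : List Q) :
    lastEntry i (run (estep step) (q :: rest) w) = run step q w := by
  obtain ⟨s, hs⟩ := run_estep_cons step w q rest
  rw [hs, lastEntry]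

lemma tail_suffix_of_reaches_estep {q : Q} {rest l : List Q}
    (h : reaches (estep step) (q :: rest) l) : rest <:+ l.tail := by
  obtain ⟨w, rfl⟩ := h
  obtain ⟨s, hs⟩ := run_estep_cons step w q rest
  rw [hs]
  exact List.suffix_append s rest

lemma tail_eq_of_equivReach_estep {q q' : Q} {rest rest' : List Q}
    (h : equivReach (estep step) (q :: rest) (q' :: rest')) : rest = rest' := by
  have hsuff : rest <:+ rest' := tail_suffix_of_reaches_estep step h.1
  have hsuff' : rest' <:+ rest := tail_suffix_of_reaches_estep step h.2
  exact hsuff.eq_of_length (le_antisymm hsuff.length_le hsuff'.length_le)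

end RExpansion

theorem stmt10_general {Q A : Type*}
    (step : Q → A → Q) (i : Q)
    (htrim : ∀ q : Q, ∃ w : List A, run step i w = q) :
    (∀ (w : List A) (a : A),
      lastEntry i (estep step (run (estep step) [i] w) a) =
        step (lastEntry i (run (estep step) [i] w)) a) ∧
    (∀ q : Q, ∃ w : List A, lastEntry i (run (estep step) [i] w) = q) ∧
    (∀ u v : List A,
      equivReach (estep step) (run (estep step) [i] u) (run (estep step) [i] v) →
      lastEntry i (run (estep step) [i] u) = lastEntry i (run (estep step) [i] v) →
      run (estep step) [i] u = run (estep step) [i] v) := by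
  refine ⟨fun w a => ?_, fun q => ?_, fun u v hequiv hlast => ?_⟩
  · have hrun : estep step (run (estep step) [i] w) a = run (estep step) [i] (w ++ [a]) :=
      (run_append_singleton (estep step) [i] w a).symm
    rw [hrun, lastEntry_run_estep, lastEntry_run_estep, run_append_singleton]
  · obtain ⟨w, hw⟩ := htrim q
    exact ⟨w, by rw [lastEntry_run_estep, hw]⟩
  · obtain ⟨s, hs⟩ := run_estep_cons step u i []
    obtain ⟨t, ht⟩ := run_estep_cons step v i []
    rw [hs, ht] at hequiv hlast ⊢
    rw [show run step i u = run step i v from hlast, tail_eq_of_equivReach_estep step hequiv]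

theorem stmt10 {Q A : Type*} [Finite Q]
    (step : Q → A → Q) (i : Q)
    (hnoret : ∀ (q : Q) (a : A), step q a ≠ i)
    (htrim : ∀ q : Q, ∃ w : List A, run step i w = q) :
    (∀ (w : List A) (a : A),
      lastEntry i (estep step (run (estep step) [i] w) a) =
        step (lastEntry i (run (estep step) [i] w)) a) ∧
    (∀ q : Q, ∃ w : List A, lastEntry i (run (estep step) [i] w) = q) ∧
    (∀ u v : List A,
      equivReach (estep step) (run (estep step) [i] u) (run (estep step) [i] v) →
      lastEntry i (run (estep step) [i] u) = lastEntry i (run (estep step) [i] v) →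
      run (estep step) [i] u = run (estep step) [i] v) :=
  stmt10_general step i htrim
end

section
/- Let A = (Q, i, ·) be a finite deterministic A-automaton and A^∧R its R-expansion (states = reachable strict reachability chains from i). Then the canonical morphism η: A^∧R → A is 'fully 1:1R': for every state p of A^∧R with η(p) = p (last entry), and every state q of A with q ≡_R p in A, there exists a state q of A^∧R with η(q) = q and q ≡_R p in A^∧R. -/
open Classical

lemma run_append {Q A : Type*} (step : Q → A → Q) (q : Q) (u v : List A) :
    run step q (u ++ v) = run step (run step q u) v := List.foldl_append

lemma reaches_trans {Q A : Type*} (step : Q → A → Q) {p q r : Q}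
    (h1 : reaches step p q) (h2 : reaches step q r) : reaches step p r := by
  obtain ⟨u, hu⟩ := h1; obtain ⟨v, hv⟩ := h2
  exact ⟨u ++ v, by rw [run_append, hu, hv]⟩

lemma equivReach_symm {Q A : Type*} (step : Q → A → Q) {p q : Q}
    (h : equivReach step p q) : equivReach step q p := ⟨h.2, h.1⟩

lemma equivReach_trans {Q A : Type*} (step : Q → A → Q) {p q r : Q}
    (h1 : equivReach step p q) (h2 : equivReach step q r) : equivReach step p r :=
  ⟨reaches_trans step h1.1 h2.1, reaches_trans step h2.2 h1.2⟩

/-- η commutes with runs: the head of the run of a nonempty chain is the run of the head. -/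
lemma erun_head {Q A : Type*} (step : Q → A → Q) :
    ∀ (w : List A) (q : Q) (rest : List Q),
      ∃ rest', run (estep step) (q :: rest) w = run step q w :: rest' := by
  intro w
  induction w with
  | nil => intro q rest; exact ⟨rest, rfl⟩
  | cons a w ih =>
    intro q rest
    show ∃ rest', run (estep step) (estep step (q :: rest) a) w = _ :: rest'
    have he : estep step (q :: rest) a =
        if equivReach step (step q a) q then step q a :: rest
        else step q a :: q :: rest := rfl
    rw [he]
    split_ifs with h
    · exact ih (step q a) rest
    · exact ih (step q a) (q :: rest)

/-- If every prefix of `z` keeps the state R-equivalent to `q`, the expansion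
run just replaces the head. -/
lemma erun_loop {Q A : Type*} (step : Q → A → Q) :
    ∀ (z : List A) (q : Q) (rest : List Q),
      (∀ z₁ z₂, z = z₁ ++ z₂ → equivReach step (run step q z₁) q) →
      run (estep step) (q :: rest) z = run step q z :: rest := by
  intro z
  induction z with
  | nil => intro q rest _; rfl
  | cons a z ih =>
    intro q rest hpre
    have ha : equivReach step (step q a) q := hpre [a] z rfl
    show run (estep step) (estep step (q :: rest) a) z = _
    have he : estep step (q :: rest) a =
        if equivReach step (step q a) q then step q a :: rest
        else step q a :: q :: rest := rfl
    rw [he, if_pos ha]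
    exact ih (step q a) rest (fun z₁ z₂ hz => by
      have h1 := hpre (a :: z₁) z₂ (by rw [hz]; rfl)
      exact equivReach_trans step
        (show equivReach step (run step (step q a) z₁) q from h1)
        (equivReach_symm step ha))

/-- The canonical morphism `η : A^∧R → A` is *fully* 1:1R: the R-class of a
state of the expansion maps onto the R-class of its image. -/
theorem stmt11 {Q A : Type*} [Finite Q]
    (step : Q → A → Q) (i : Q)
    (hnoret : ∀ (q : Q) (a : A), step q a ≠ i) :
    ∀ (u : List A) (q : Q),
      equivReach step (lastEntry i (run (estep step) [i] u)) q →
      ∃ v : List A, lastEntry i (run (estep step) [i] v) = q ∧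
        equivReach (estep step) (run (estep step) [i] u) (run (estep step) [i] v) := by
  intro u q hq
  obtain ⟨rest, hrest⟩ := erun_head step u i []
  set p := run step i u with hp
  have hlast : lastEntry i (run (estep step) [i] u) = p := by rw [hrest]; rfl
  rw [hlast] at hq
  obtain ⟨w, hw⟩ := hq.1
  obtain ⟨w', hw'⟩ := hq.2
  refine ⟨u ++ w, ?_, ?_⟩
  · have : run (estep step) [i] (u ++ w) = run (estep step) (p :: rest) w := by
      rw [run_append, hrest]
    obtain ⟨rest2, hrest2⟩ := erun_head step w p rest
    rw [this, hrest2, hw]; rfl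
  · constructor
    · exact ⟨w, by rw [run_append]⟩
    · refine ⟨w', ?_⟩
      have hloop : run step p (w ++ w') = p := by rw [run_append, hw, hw']
      rw [run_append, hrest, ← run_append,
        erun_loop step (w ++ w') p rest ?_, hloop]
      intro z₁ z₂ hz
      constructor
      · exact ⟨z₂, by rw [← run_append, ← hz, hloop]⟩
      · exact ⟨z₁, rfl⟩
end
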